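/- arXiv:2110.12393 — 2 statements merged into one kernel-verified Lean document; each statement's English description precedes it below -/
import Mathlib

section
/- Let $K\subset\mathbb{R}^n$ be compact and let $\Phi_u$ denote the time-1 flow of the control system $\dot x=\sum_i F_i(x)u_i$ with $F_i$ smooth and bounded together with their derivatives. Suppose $\Psi:K\to\mathbb{R}^n$ is a map that is not of the form $\Phi_u|_K$ for any $u\in L^2([0,1],\mathbb{R}^l)$, and suppose $(u_\ell)_{\ell\ge1}$ is a sequence of controls with $\Phi_{u_\ell}\to\Psi$ uniformly on $K$. Then $\sup_\ell \|u_\ell\|_{L^2}=+\infty$. -/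
open MeasureTheory Filter

/-- Integral (Carathéodory) formulation of `ẋ(s) = ∑ i, uᵢ(s) • Fᵢ(x s)`, `x 0 = x₀`. -/
def IsCtrlTraj {n l : ℕ} (F : Fin l → EuclideanSpace ℝ (Fin n) → EuclideanSpace ℝ (Fin n))
    (u : ℝ → Fin l → ℝ) (x0 : EuclideanSpace ℝ (Fin n))
    (x : ℝ → EuclideanSpace ℝ (Fin n)) : Prop :=
  ∀ s ∈ Set.Icc (0:ℝ) 1,
    x s = x0 + ∫ τ in (0:ℝ)..s, ∑ i, u τ i • F i (x τ)

/-- `Φ` is the time-1 flow of the control system driven by `u`. -/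
def IsFlow {n l : ℕ} (F : Fin l → EuclideanSpace ℝ (Fin n) → EuclideanSpace ℝ (Fin n))
    (u : ℝ → Fin l → ℝ) (Φ : EuclideanSpace ℝ (Fin n) → EuclideanSpace ℝ (Fin n)) : Prop :=
  ∀ x0, ∃ x : ℝ → EuclideanSpace ℝ (Fin n), IsCtrlTraj F u x0 x ∧ Φ x0 = x 1

/-- The `L²([0,1])`-norm of a control. -/
noncomputable def ctrlNorm {l : ℕ} (u : ℝ → Fin l → ℝ) : ℝ :=
  Real.sqrt (∫ s in Set.Icc (0:ℝ) 1, ∑ i, (u s i)^2)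

open Topology Set

section Aux


lemma weak_compact_aux {H : Type*} [NormedAddCommGroup H] [InnerProductSpace ℝ H]
    [CompleteSpace H] [TopologicalSpace.SeparableSpace H]
    (v : ℕ → H) (R : ℝ) (hv : ∀ k, ‖v k‖ ≤ R) :
    ∃ (w : H) (φ : ℕ → ℕ), StrictMono φ ∧
      ∀ h : H, Tendsto (fun k => (inner ℝ (v (φ k)) h : ℝ)) atTop (𝓝 (inner ℝ w h)) := by
  have hR : 0 ≤ R := le_trans (norm_nonneg _) (hv 0)
  obtain ⟨e, he⟩ := TopologicalSpace.exists_dense_seq H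
  set S : Set (ℕ → ℝ) := Set.pi Set.univ fun m => Set.Icc (-(R * ‖e m‖)) (R * ‖e m‖) with hS
  have hScomp : IsCompact S := isCompact_univ_pi fun m => isCompact_Icc
  have hb : ∀ (k m : ℕ), |(inner ℝ (v k) (e m) : ℝ)| ≤ R * ‖e m‖ := by
    intro k m
    refine le_trans (abs_real_inner_le_norm _ _) ?_
    exact mul_le_mul_of_nonneg_right (hv k) (norm_nonneg _)
  have ha : ∀ k, (fun m => (inner ℝ (v k) (e m) : ℝ)) ∈ S := by
    intro k m _
    exact abs_le.mp (hb k m)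
  obtain ⟨b, -, φ, hφ, hab⟩ := hScomp.isSeqCompact ha
  have hcm : ∀ m, Tendsto (fun k => (inner ℝ (v (φ k)) (e m) : ℝ)) atTop (𝓝 (b m)) := by
    intro m
    exact (tendsto_pi_nhds.mp hab) m
  have hcauchy : ∀ h : H, CauchySeq (fun k => (inner ℝ (v (φ k)) h : ℝ)) := by
    intro h
    rw [Metric.cauchySeq_iff]
    intro ε hε
    have hε4 : 0 < ε / (4 * (R + 1)) := by positivity
    obtain ⟨m, hm⟩ := he.exists_dist_lt h hε4
    obtain ⟨N, hN⟩ := (Metric.cauchySeq_iff.mp (hcm m).cauchySeq) (ε / 2) (by positivity)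
    refine ⟨N, fun j hj k hk => ?_⟩
    have h1 : ∀ p : ℕ, |(inner ℝ (v p) h : ℝ) - inner ℝ (v p) (e m)| ≤ R * dist h (e m) := by
      intro p
      have heq : (inner ℝ (v p) h : ℝ) - inner ℝ (v p) (e m) = inner ℝ (v p) (h - e m) := by
        rw [inner_sub_right]
      rw [heq, dist_eq_norm]
      refine le_trans (abs_real_inner_le_norm _ _) ?_
      exact mul_le_mul_of_nonneg_right (hv p) (norm_nonneg _)
    have key : dist (inner ℝ (v (φ j)) h : ℝ) (inner ℝ (v (φ k)) h)
        ≤ dist (inner ℝ (v (φ j)) (e m) : ℝ) (inner ℝ (v (φ k)) (e m)) + 2 * (R * dist h (e m)) := by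
      rw [Real.dist_eq]
      calc |(inner ℝ (v (φ j)) h : ℝ) - inner ℝ (v (φ k)) h|
          = |((inner ℝ (v (φ j)) h : ℝ) - inner ℝ (v (φ j)) (e m)) + ((inner ℝ (v (φ j)) (e m) : ℝ) - inner ℝ (v (φ k)) (e m)) + ((inner ℝ (v (φ k)) (e m) : ℝ) - inner ℝ (v (φ k)) h)| := by ring_nf
        _ ≤ |((inner ℝ (v (φ j)) h : ℝ) - inner ℝ (v (φ j)) (e m))| + |((inner ℝ (v (φ j)) (e m) : ℝ) - inner ℝ (v (φ k)) (e m))| + |((inner ℝ (v (φ k)) (e m) : ℝ) - inner ℝ (v (φ k)) h)| :=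
            abs_add_three _ _ _
        _ ≤ R * dist h (e m) + |((inner ℝ (v (φ j)) (e m) : ℝ) - inner ℝ (v (φ k)) (e m))| + R * dist h (e m) := by
            gcongr
            · exact h1 (φ j)
            · rw [abs_sub_comm]; exact h1 (φ k)
        _ = dist (inner ℝ (v (φ j)) (e m) : ℝ) (inner ℝ (v (φ k)) (e m)) + 2 * (R * dist h (e m)) := by
            rw [Real.dist_eq]; ring
    have hRe : R * dist h (e m) < ε / 4 := by
      have h2 : R * dist h (e m) ≤ R * (ε / (4 * (R + 1))) :=
        mul_le_mul_of_nonneg_left hm.le hR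
      have h3 : R * (ε / (4 * (R + 1))) < ε / 4 := by
        have h4 : R * (ε / (4 * (R + 1))) = R * ε / (4 * (R + 1)) := by ring
        rw [h4, div_lt_div_iff₀ (by positivity) (by norm_num)]
        nlinarith
      exact lt_of_le_of_lt h2 h3
    calc dist (inner ℝ (v (φ j)) h : ℝ) (inner ℝ (v (φ k)) h)
        ≤ dist (inner ℝ (v (φ j)) (e m) : ℝ) (inner ℝ (v (φ k)) (e m)) + 2 * (R * dist h (e m)) := key
      _ < ε / 2 + 2 * (ε / 4) := by
          have h5 := hN j hj k hk
          have h6 : 2 * (R * dist h (e m)) < 2 * (ε / 4) := by linarith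
          linarith
      _ ≤ ε := by linarith
  have hlim : ∀ h : H, ∃ c : ℝ, Tendsto (fun k => (inner ℝ (v (φ k)) h : ℝ)) atTop (𝓝 c) :=
    fun h => cauchySeq_tendsto_of_complete (hcauchy h)
  choose g hg using hlim
  have hgadd : ∀ h h' : H, g (h + h') = g h + g h' := by
    intro h h'
    refine tendsto_nhds_unique (a := g (h+h')) ?_ ((hg h).add (hg h'))
    have : (fun k => (inner ℝ (v (φ k)) (h + h') : ℝ)) = fun k => (inner ℝ (v (φ k)) h : ℝ) + inner ℝ (v (φ k)) h' := by
      funext k; rw [inner_add_right]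
    rw [← this]; exact hg _
  have hgsmul : ∀ (c : ℝ) (h : H), g (c • h) = c * g h := by
    intro c h
    refine tendsto_nhds_unique (a := g (c • h)) ?_ ((hg h).const_mul c)
    have : (fun k => (inner ℝ (v (φ k)) (c • h) : ℝ)) = fun k => c * inner ℝ (v (φ k)) h := by
      funext k; rw [real_inner_smul_right]
    rw [← this]; exact hg _
  have hgbdd : ∀ h : H, ‖g h‖ ≤ R * ‖h‖ := by
    intro h
    rw [Real.norm_eq_abs]
    refine le_of_tendsto ((hg h).abs) (Filter.Eventually.of_forall fun k => ?_)
    refine le_trans (abs_real_inner_le_norm _ _) ?_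
    exact mul_le_mul_of_nonneg_right (hv _) (norm_nonneg _)
  let L : H →L[ℝ] ℝ := LinearMap.mkContinuous
    { toFun := g, map_add' := hgadd, map_smul' := hgsmul } R (fun h => hgbdd h)
  refine ⟨(InnerProductSpace.toDual ℝ H).symm L, φ, hφ, fun h => ?_⟩
  rw [InnerProductSpace.toDual_symm_apply]
  exact hg h


lemma euclid_coord_le {l : ℕ} (v : EuclideanSpace ℝ (Fin l)) (j : Fin l) : |v j| ≤ ‖v‖ := by
  rw [EuclideanSpace.norm_eq]
  have h1 : |v j| = Real.sqrt ((v j)^2) := by rw [Real.sqrt_sq_eq_abs]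
  rw [h1]
  apply Real.sqrt_le_sqrt
  have : ((v j))^2 = ‖v j‖^2 := by rw [Real.norm_eq_abs, sq_abs]
  rw [this]
  exact Finset.single_le_sum (f := fun i => ‖v i‖^2) (fun i _ => sq_nonneg _) (Finset.mem_univ j)

lemma euclid_norm_le_of_coords {l : ℕ} (v : EuclideanSpace ℝ (Fin l)) (C : ℝ) (hC : 0 ≤ C)
    (h : ∀ i, |v i| ≤ C) : ‖v‖ ≤ Real.sqrt l * C := by
  rw [EuclideanSpace.norm_eq]
  have h1 : ∑ i, ‖v i‖^2 ≤ l * C^2 := by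
    calc ∑ i, ‖v i‖^2 ≤ ∑ _i : Fin l, C^2 := by
          refine Finset.sum_le_sum fun i _ => ?_
          rw [Real.norm_eq_abs, sq_abs, ← sq_abs]
          exact pow_le_pow_left₀ (abs_nonneg _) (h i) 2
      _ = l * C^2 := by rw [Finset.sum_const, Finset.card_univ, Fintype.card_fin, nsmul_eq_mul]
  refine le_trans (Real.sqrt_le_sqrt h1) ?_
  rw [Real.sqrt_mul (Nat.cast_nonneg l), Real.sqrt_sq hC]

lemma euclid_norm_le_sum_abs {l : ℕ} (v : EuclideanSpace ℝ (Fin l)) : ‖v‖ ≤ ∑ j, |v j| := by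
  rw [EuclideanSpace.norm_eq]
  have h1 : ∑ i, ‖v i‖^2 ≤ (∑ j, |v j|)^2 := by
    have := Finset.sum_sq_le_sq_sum_of_nonneg (s := Finset.univ) (f := fun i => |v i|)
      (fun i _ => abs_nonneg _)
    simpa [Real.norm_eq_abs, sq_abs] using this
  refine le_trans (Real.sqrt_le_sqrt h1) ?_
  rw [Real.sqrt_sq (Finset.sum_nonneg fun j _ => abs_nonneg _)]


lemma comp_int {l : ℕ} (v : ℝ → Fin l → ℝ)
    (hv : MemLp v 2 (volume.restrict (Set.Icc (0:ℝ) 1))) :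
    (∀ i, IntegrableOn (fun τ => v τ i) (Set.Icc (0:ℝ) 1) volume) ∧
    (∀ i, IntegrableOn (fun τ => (v τ i)^2) (Set.Icc (0:ℝ) 1) volume) := by
  have hcomp : ∀ i, MemLp (fun τ => v τ i) 2 (volume.restrict (Set.Icc (0:ℝ) 1)) := fun i =>
    (ContinuousLinearMap.proj (R := ℝ) (φ := fun _ : Fin l => ℝ) i).comp_memLp' hv
  exact ⟨fun i => (hcomp i).integrable one_le_two, fun i => (hcomp i).integrable_sq⟩

lemma norm_g_le {n l : ℕ} (F : Fin l → EuclideanSpace ℝ (Fin n) → EuclideanSpace ℝ (Fin n))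
    {C0 : ℝ} (hC0 : ∀ i y, ‖F i y‖ ≤ C0) (u : ℝ → Fin l → ℝ) (x : ℝ → EuclideanSpace ℝ (Fin n))
    (τ : ℝ) : ‖∑ i, u τ i • F i (x τ)‖ ≤ C0 * ∑ i, |u τ i| := by
  refine le_trans (norm_sum_le _ _) ?_
  rw [Finset.mul_sum]
  refine Finset.sum_le_sum fun i _ => ?_
  rw [norm_smul, Real.norm_eq_abs]
  calc |u τ i| * ‖F i (x τ)‖ ≤ |u τ i| * C0 := by
        exact mul_le_mul_of_nonneg_left (hC0 i _) (abs_nonneg _)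
    _ = C0 * |u τ i| := mul_comm _ _

lemma traj_integrableOn {n l : ℕ} {F : Fin l → EuclideanSpace ℝ (Fin n) → EuclideanSpace ℝ (Fin n)}
    {u : ℝ → Fin l → ℝ} {x0 : EuclideanSpace ℝ (Fin n)} {x : ℝ → EuclideanSpace ℝ (Fin n)}
    {C0 : ℝ} (hC0 : ∀ i y, ‖F i y‖ ≤ C0)
    (hui : ∀ i, Integrable (fun τ => u τ i) (volume.restrict (Set.Ioc (0:ℝ) 1)))
    (hx : IsCtrlTraj F u x0 x) :
    IntegrableOn (fun τ => ∑ i, u τ i • F i (x τ)) (Set.Ioc (0:ℝ) 1) volume := by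
  set g : ℝ → EuclideanSpace ℝ (Fin n) := fun τ => ∑ i, u τ i • F i (x τ) with hg
  have habs : IntegrableOn (fun τ => C0 * ∑ i, |u τ i|) (Set.Ioc (0:ℝ) 1) volume := by
    exact (integrable_finset_sum _ fun i _ => (hui i).abs).const_mul C0
  by_contra hcon
  set A : Set ℝ := {s | s ∈ Set.Ioc (0:ℝ) 1 ∧ ¬ IntervalIntegrable g volume 0 s} with hA
  have h1A : (1:ℝ) ∈ A := by
    refine ⟨⟨one_pos, le_refl 1⟩, fun hint => hcon ?_⟩
    exact (intervalIntegrable_iff_integrableOn_Ioc_of_le zero_le_one).mp hint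
  have hAne : A.Nonempty := ⟨1, h1A⟩
  have hbdd : BddBelow A := ⟨0, fun s hs => hs.1.1.le⟩
  set c := sInf A with hc
  have hc0 : 0 ≤ c := le_csInf hAne (fun s hs => hs.1.1.le)
  have hc1 : c ≤ 1 := csInf_le hbdd h1A
  have hxA : ∀ s ∈ A, x s = x0 := by
    intro s hs
    have := hx s ⟨hs.1.1.le, hs.1.2⟩
    rwa [intervalIntegral.integral_undef hs.2, add_zero] at this
  have hAup : ∀ s, c < s → s ≤ 1 → s ∈ A := by
    intro s hcs hs1
    have hs0 : 0 < s := lt_of_le_of_lt hc0 hcs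
    obtain ⟨a, haA, has⟩ := exists_lt_of_csInf_lt hAne hcs
    refine ⟨⟨hs0, hs1⟩, fun hint => haA.2 ?_⟩
    refine hint.mono_set ?_
    rw [Set.uIcc_of_le haA.1.1.le, Set.uIcc_of_le hs0.le]
    exact Set.Icc_subset_Icc le_rfl has.le
  have hxc : ∀ s, c < s → s ≤ 1 → x s = x0 := fun s h h' => hxA s (hAup s h h')
  have h2 : IntegrableOn g (Set.Ioc c 1) volume := by
    have heq : Set.EqOn (fun τ => ∑ i, u τ i • F i x0) g (Set.Ioc c 1) := by
      intro τ hτ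
      simp only [hg]
      rw [hxc τ hτ.1 hτ.2]
    refine IntegrableOn.congr_fun ?_ heq measurableSet_Ioc
    refine integrable_finset_sum _ fun i _ => ?_
    refine Integrable.smul_const ?_ (F i x0)
    exact (hui i).mono_measure (Measure.restrict_mono (Set.Ioc_subset_Ioc hc0 le_rfl) le_rfl)
  have h3 : IntegrableOn g (Set.Ioo 0 c) volume := by
    rcases eq_or_lt_of_le hc0 with h | hcpos
    · simp [← h]
    have hunion : Set.Ioo 0 c = ⋃ (k:ℕ), Set.Ioc 0 (c - c/(k+1)) := by
      ext τ
      simp only [Set.mem_Ioo, Set.mem_iUnion, Set.mem_Ioc]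
      constructor
      · rintro ⟨h0, hτc⟩
        obtain ⟨k, hk⟩ := exists_nat_gt (c / (c - τ))
        refine ⟨k, h0, ?_⟩
        have hct : 0 < c - τ := by linarith
        have hk1 : c / (c - τ) < k + 1 := by
          push_cast; linarith
        have : c / (k+1) < c - τ := by
          rw [div_lt_iff₀ (by positivity)]
          rw [div_lt_iff₀ hct] at hk1
          nlinarith
        linarith
      · rintro ⟨k, h0, hτ⟩
        have : c / (k+1) > 0 := by positivity
        exact ⟨h0, by linarith⟩
    have hpiece : ∀ k : ℕ, IntegrableOn g (Set.Ioc 0 (c - c/(k+1))) volume := by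
      intro k
      rcases le_or_gt (c - c/(k+1)) 0 with h | h
      · rw [Set.Ioc_eq_empty (by exact fun hh => absurd hh (not_lt.mpr h))]
        exact integrableOn_empty
      · have hsk : c - c/(k+1) < c := by
          have : c / (k+1) > 0 := by positivity
          linarith
        have hnotA : (c - c/(k+1)) ∉ A := notMem_of_lt_csInf hsk hbdd
        have : IntervalIntegrable g volume 0 (c - c/(k+1)) := by
          by_contra hni
          exact hnotA ⟨⟨h, by linarith⟩, hni⟩
        exact (intervalIntegrable_iff_integrableOn_Ioc_of_le (by linarith)).mp this
    have hmeas : AEStronglyMeasurable g (volume.restrict (Set.Ioo 0 c)) := by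
      rw [hunion]
      exact aestronglyMeasurable_iUnion_iff.mpr fun k => (hpiece k).aestronglyMeasurable
    refine Integrable.mono' (habs.mono_set ?_) hmeas (Filter.Eventually.of_forall fun τ => ?_)
    · exact fun τ hτ => ⟨hτ.1, le_trans hτ.2.le hc1⟩
    · exact norm_g_le F hC0 u x τ
  have h4 : IntegrableOn g (Set.Ioc 0 1) volume := by
    have hsing : IntegrableOn g {c} volume := by
      have : volume.restrict ({c} : Set ℝ) = 0 := by
        simp [Measure.restrict_eq_zero]
      rw [IntegrableOn, this]
      exact integrable_zero_measure
    have hsub : Set.Ioc (0:ℝ) 1 ⊆ Set.Ioo 0 c ∪ ({c} ∪ Set.Ioc c 1) := by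
      intro τ hτ
      rcases lt_trichotomy τ c with h | h | h
      · exact Or.inl ⟨hτ.1, h⟩
      · exact Or.inr (Or.inl h)
      · exact Or.inr (Or.inr ⟨h, hτ.2⟩)
    exact ((h3.union (hsing.union h2)).mono_set hsub)
  exact hcon h4


lemma abs_le_am {a M : ℝ} (hM : 0 < M) : |a| ≤ M/2 + a^2/(2*M) := by
  rw [div_add_div _ _ (by norm_num) (by positivity), le_div_iff₀ (by positivity)]
  nlinarith [sq_nonneg (|a| - M), sq_abs a]

lemma absum_int_le {l : ℕ} {u : ℝ → Fin l → ℝ} {R2 : ℝ}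
    (hui2 : ∀ i, IntegrableOn (fun τ => (u τ i)^2) (Set.Icc (0:ℝ) 1) volume)
    (hui : ∀ i, IntegrableOn (fun τ => u τ i) (Set.Icc (0:ℝ) 1) volume)
    (hR2 : ∀ i, ∫ τ in Set.Icc (0:ℝ) 1, (u τ i)^2 ≤ R2)
    {M t s : ℝ} (hM : 0 < M) (ht : 0 ≤ t) (hts : t ≤ s) (hs : s ≤ 1) :
    ∫ τ in t..s, ∑ i, |u τ i| ≤ l * (M * (s - t)/2 + R2/(2*M)) := by
  have hsub : Set.Ioc t s ⊆ Set.Icc (0:ℝ) 1 := fun τ hτ => ⟨le_trans ht hτ.1.le, le_trans hτ.2 hs⟩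
  have hIu : ∀ i, IntervalIntegrable (fun τ => u τ i) volume t s :=
    fun i => (intervalIntegrable_iff_integrableOn_Ioc_of_le hts).mpr ((hui i).mono_set hsub)
  have hIu2 : ∀ i, IntervalIntegrable (fun τ => (u τ i)^2) volume t s :=
    fun i => (intervalIntegrable_iff_integrableOn_Ioc_of_le hts).mpr ((hui2 i).mono_set hsub)
  have h1 : ∫ τ in t..s, ∑ i, |u τ i| = ∑ i, ∫ τ in t..s, |u τ i| :=
    intervalIntegral.integral_finset_sum (fun i _ => (hIu i).abs)
  rw [h1]
  have h2 : ∀ i : Fin l, ∫ τ in t..s, |u τ i| ≤ M * (s - t)/2 + R2/(2*M) := by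
    intro i
    have hb : ∫ τ in t..s, |u τ i| ≤ ∫ τ in t..s, (M/2 + (u τ i)^2/(2*M)) := by
      refine intervalIntegral.integral_mono_on hts (hIu i).abs ?_ (fun τ _ => abs_le_am hM)
      exact intervalIntegrable_const.add ((hIu2 i).div_const _)
    have h3 : ∫ τ in t..s, (M/2 + (u τ i)^2/(2*M)) = (s - t) * (M/2) + (∫ τ in t..s, (u τ i)^2)/(2*M) := by
      rw [intervalIntegral.integral_add intervalIntegrable_const ((hIu2 i).div_const _),
        intervalIntegral.integral_const, intervalIntegral.integral_div]
      simp [smul_eq_mul]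
    have h4 : ∫ τ in t..s, (u τ i)^2 ≤ R2 := by
      rw [intervalIntegral.integral_of_le hts]
      refine le_trans ?_ (hR2 i)
      refine setIntegral_mono_set (hui2 i) ?_ (HasSubset.Subset.eventuallyLE hsub)
      exact Filter.Eventually.of_forall fun τ => sq_nonneg _
    calc ∫ τ in t..s, |u τ i| ≤ (s - t) * (M/2) + (∫ τ in t..s, (u τ i)^2)/(2*M) := by rw [← h3]; exact hb
      _ ≤ (s - t) * (M/2) + R2/(2*M) := by gcongr
      _ = M * (s - t)/2 + R2/(2*M) := by ring
  calc ∑ i, ∫ τ in t..s, |u τ i| ≤ ∑ _i : Fin l, (M * (s - t)/2 + R2/(2*M)) := Finset.sum_le_sum fun i _ => h2 i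
    _ = l * (M * (s - t)/2 + R2/(2*M)) := by
        rw [Finset.sum_const, Finset.card_univ, Fintype.card_fin, nsmul_eq_mul]


section TrajProps
variable {n l : ℕ} {F : Fin l → EuclideanSpace ℝ (Fin n) → EuclideanSpace ℝ (Fin n)}
  {u : ℝ → Fin l → ℝ} {x0 : EuclideanSpace ℝ (Fin n)} {x : ℝ → EuclideanSpace ℝ (Fin n)}
  {C0 R2 : ℝ}
lemma traj_props (hC0 : ∀ i y, ‖F i y‖ ≤ C0) (hC0nn : 0 ≤ C0)
    (hui : ∀ i, IntegrableOn (fun τ => u τ i) (Set.Icc (0:ℝ) 1) volume)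
    (hui2 : ∀ i, IntegrableOn (fun τ => (u τ i)^2) (Set.Icc (0:ℝ) 1) volume)
    (hR2 : ∀ i, ∫ τ in Set.Icc (0:ℝ) 1, (u τ i)^2 ≤ R2)
    (hx : IsCtrlTraj F u x0 x) :
    (∀ s ∈ Set.Icc (0:ℝ) 1, IntervalIntegrable (fun τ => ∑ i, u τ i • F i (x τ)) volume 0 s) ∧
    ContinuousOn x (Set.Icc (0:ℝ) 1) ∧
    (∀ M, 0 < M → ∀ t s : ℝ, 0 ≤ t → t ≤ s → s ≤ 1 →
      ‖x s - x t‖ ≤ C0 * (l * (M * (s - t)/2 + R2/(2*M)))) := by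
  set g : ℝ → EuclideanSpace ℝ (Fin n) := fun τ => ∑ i, u τ i • F i (x τ) with hg
  have hui' : ∀ i, Integrable (fun τ => u τ i) (volume.restrict (Set.Ioc (0:ℝ) 1)) :=
    fun i => (hui i).mono_set Set.Ioc_subset_Icc_self
  have hIoc : IntegrableOn g (Set.Ioc (0:ℝ) 1) volume := traj_integrableOn hC0 hui' hx
  have hInt : ∀ s ∈ Set.Icc (0:ℝ) 1, IntervalIntegrable g volume 0 s := by
    intro s hs
    refine ((intervalIntegrable_iff_integrableOn_Ioc_of_le zero_le_one).mpr hIoc).mono_set ?_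
    rw [Set.uIcc_of_le hs.1, Set.uIcc_of_le zero_le_one]
    exact Set.Icc_subset_Icc le_rfl hs.2
  have hIcc : IntegrableOn g (Set.Icc (0:ℝ) 1) volume := by
    rwa [IntegrableOn, ← Measure.restrict_congr_set Ioc_ae_eq_Icc]
  refine ⟨hInt, ?_, ?_⟩
  · have hcont := intervalIntegral.continuousOn_primitive (f := g) (a := 0) (b := 1) (μ := volume) hIcc
    have : ContinuousOn (fun s => x0 + ∫ t in Set.Ioc (0:ℝ) s, g t ∂volume) (Set.Icc (0:ℝ) 1) :=
      continuousOn_const.add hcont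
    refine this.congr ?_
    intro s hs
    rw [hx s hs, intervalIntegral.integral_of_le hs.1]
  · intro M hM t s ht hts hs
    have hsub : (∫ τ in (0:ℝ)..s, g τ) - ∫ τ in (0:ℝ)..t, g τ = ∫ τ in t..s, g τ :=
      intervalIntegral.integral_interval_sub_left (hInt s ⟨le_trans ht hts, hs⟩)
        (hInt t ⟨ht, le_trans hts hs⟩)
    have hxst : x s - x t = ∫ τ in t..s, g τ := by
      rw [hx s ⟨le_trans ht hts, hs⟩, hx t ⟨ht, le_trans hts hs⟩]
      rw [← hsub]; abel
    rw [hxst]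
    have h1 : ‖∫ τ in t..s, g τ‖ ≤ ∫ τ in t..s, ‖g τ‖ :=
      intervalIntegral.norm_integral_le_integral_norm hts
    have hIg : IntervalIntegrable g volume t s := by
      refine ((intervalIntegrable_iff_integrableOn_Ioc_of_le zero_le_one).mpr hIoc).mono_set ?_
      rw [Set.uIcc_of_le hts, Set.uIcc_of_le zero_le_one]
      exact Set.Icc_subset_Icc ht hs
    have hIabs : ∀ i : Fin l, IntervalIntegrable (fun τ => u τ i) volume t s := by
      intro i
      refine (((intervalIntegrable_iff_integrableOn_Ioc_of_le zero_le_one).mpr (hui' i))).mono_set ?_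
      rw [Set.uIcc_of_le hts, Set.uIcc_of_le zero_le_one]
      exact Set.Icc_subset_Icc ht hs
    have hIsum : IntervalIntegrable (fun τ => ∑ i, |u τ i|) volume t s := by
      refine (intervalIntegrable_iff_integrableOn_Ioc_of_le hts).mpr ?_
      refine integrable_finset_sum _ fun i _ => ?_
      refine ((hui i).mono_set ?_).abs
      exact fun τ hτ => ⟨le_trans ht hτ.1.le, le_trans hτ.2 hs⟩
    have h2 : ∫ τ in t..s, ‖g τ‖ ≤ ∫ τ in t..s, C0 * ∑ i, |u τ i| := by
      refine intervalIntegral.integral_mono_on hts hIg.norm ?_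
        (fun τ _ => norm_g_le F hC0 u x τ)
      exact hIsum.const_mul C0
    have h3 : ∫ τ in t..s, C0 * ∑ i, |u τ i| = C0 * ∫ τ in t..s, ∑ i, |u τ i| :=
      intervalIntegral.integral_const_mul _ _
    have h4 := absum_int_le hui2 hui hR2 hM ht hts hs
    calc ‖∫ τ in t..s, g τ‖ ≤ ∫ τ in t..s, ‖g τ‖ := h1
      _ ≤ ∫ τ in t..s, C0 * ∑ i, |u τ i| := h2
      _ = C0 * ∫ τ in t..s, ∑ i, |u τ i| := h3
      _ ≤ C0 * (l * (M * (s - t)/2 + R2/(2*M))) := mul_le_mul_of_nonneg_left h4 hC0nn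
end TrajProps

section Core2
variable {n l : ℕ}
    {F : Fin l → EuclideanSpace ℝ (Fin n) → EuclideanSpace ℝ (Fin n)}
    {C0 L R2 : ℝ}

set_option maxHeartbeats 2000000 in
lemma exists_limit_traj (hC0 : ∀ i y, ‖F i y‖ ≤ C0) (hC0nn : 0 ≤ C0)
    (hFc : ∀ i, Continuous (F i))
    (hLip : ∀ i (a b : EuclideanSpace ℝ (Fin n)), ‖F i a - F i b‖ ≤ L * ‖a - b‖)
    (hLnn : 0 ≤ L) (hR2nn : 0 ≤ R2)
    (q : ℕ → ℝ → Fin l → ℝ)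
    (hq : ∀ k, MemLp (q k) 2 (volume.restrict (Set.Icc (0:ℝ) 1)))
    (hqR2 : ∀ k i, ∫ τ in Set.Icc (0:ℝ) 1, (q k τ i)^2 ≤ R2)
    (uu : ℝ → Fin l → ℝ)
    (huu : MemLp uu 2 (volume.restrict (Set.Icc (0:ℝ) 1)))
    (hweak : ∀ f : ℝ → EuclideanSpace ℝ (Fin l), MemLp f 2 (volume.restrict (Set.Icc (0:ℝ) 1)) →
      Tendsto (fun k => ∫ τ in Set.Icc (0:ℝ) 1, ∑ i, q k τ i * f τ i)
        atTop (𝓝 (∫ τ in Set.Icc (0:ℝ) 1, ∑ i, uu τ i * f τ i)))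
    (x0 : EuclideanSpace ℝ (Fin n)) (x : ℕ → ℝ → EuclideanSpace ℝ (Fin n))
    (hx : ∀ k, IsCtrlTraj F (q k) x0 (x k)) :
    ∃ xx, IsCtrlTraj F uu x0 xx ∧
      ∃ ρ : ℕ → ℕ, StrictMono ρ ∧ Tendsto (fun k => x (ρ k) 1) atTop (𝓝 (xx 1)) := by
  classical
  -- component integrability
  have comp_int : ∀ (v : ℝ → Fin l → ℝ), MemLp v 2 (volume.restrict (Set.Icc (0:ℝ) 1)) →
      (∀ i, IntegrableOn (fun τ => v τ i) (Set.Icc (0:ℝ) 1) volume) ∧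
      (∀ i, IntegrableOn (fun τ => (v τ i)^2) (Set.Icc (0:ℝ) 1) volume) := by
    intro v hv
    have hcomp : ∀ i, MemLp (fun τ => v τ i) 2 (volume.restrict (Set.Icc (0:ℝ) 1)) := fun i =>
      (ContinuousLinearMap.proj (R := ℝ) (φ := fun _ : Fin l => ℝ) i).comp_memLp' hv
    exact ⟨fun i => (hcomp i).integrable one_le_two, fun i => (hcomp i).integrable_sq⟩
  have props := fun k => traj_props hC0 hC0nn (comp_int _ (hq k)).1 (comp_int _ (hq k)).2
    (hqR2 k) (hx k)
  have hx0 : ∀ k, x k 0 = x0 := by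
    intro k
    have := hx k 0 ⟨le_rfl, zero_le_one⟩
    rwa [intervalIntegral.integral_same, add_zero] at this
  -- uniform bound on trajectories
  set B : ℝ := C0 * (l * (1 * 1 / 2 + R2 / (2 * 1))) with hB
  have hBnn : 0 ≤ B := by positivity
  have hnorm : ∀ k, ∀ τ ∈ Set.Icc (0:ℝ) 1, ‖x k τ‖ ≤ ‖x0‖ + B := by
    intro k τ hτ
    have h1 := (props k).2.2 1 one_pos 0 τ le_rfl hτ.1 hτ.2
    rw [hx0 k] at h1
    have h2 : ‖x k τ‖ ≤ ‖x k τ - x0‖ + ‖x0‖ := by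
      calc ‖x k τ‖ = ‖(x k τ - x0) + x0‖ := by rw [sub_add_cancel]
        _ ≤ ‖x k τ - x0‖ + ‖x0‖ := norm_add_le _ _
    have h3 : C0 * (↑l * (1 * (τ - 0) / 2 + R2 / (2 * 1))) ≤ B := by
      rw [hB]; gcongr; · linarith [hτ.2]
    linarith
  -- bounded continuous functions on Icc
  set α := ↥(Set.Icc (0:ℝ) 1) with hα
  let X : ℕ → BoundedContinuousFunction α (EuclideanSpace ℝ (Fin n)) := fun k =>
    BoundedContinuousFunction.mkOfCompact ⟨fun τ => x k ↑τ, ((props k).2.1).restrict⟩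
  have hXapp : ∀ k (τ : α), X k τ = x k ↑τ := fun k τ => rfl
  -- equicontinuity modulus
  set CC : ℝ := C0 * l * (1 + R2) / 2 with hCC
  have hCCnn : 0 ≤ CC := by positivity
  have hXmod : ∀ k (a b : α), dist (X k a) (X k b) ≤ CC * Real.sqrt (dist a b) := by
    intro k a b
    wlog hab : (b:ℝ) ≤ (a:ℝ) generalizing a b
    · rw [dist_comm, dist_comm a b]
      exact this b a (le_of_not_ge hab)
    have hd : dist a b = (a:ℝ) - (b:ℝ) := by
      rw [Subtype.dist_eq, Real.dist_eq, abs_of_nonneg (by linarith)]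
    rcases eq_or_lt_of_le hab with heq | hlt
    · have : (a:ℝ) = (b:ℝ) := heq.symm
      rw [hXapp, hXapp, this, hd, this]
      simp
    · set d : ℝ := (a:ℝ) - (b:ℝ) with hdd
      have hdpos : 0 < d := by rw [hdd]; linarith
      have hM : 0 < (Real.sqrt d)⁻¹ := by positivity
      have h1 := (props k).2.2 _ hM (b:ℝ) (a:ℝ) b.2.1 hab a.2.2
      rw [hXapp, hXapp, dist_eq_norm, hd]
      refine le_trans h1 ?_
      have hsq : Real.sqrt d * Real.sqrt d = d := Real.mul_self_sqrt hdpos.le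
      have hsqpos : 0 < Real.sqrt d := Real.sqrt_pos.mpr hdpos
      have heq2 : C0 * (↑l * ((Real.sqrt d)⁻¹ * ((a:ℝ) - (b:ℝ)) / 2 + R2 / (2 * (Real.sqrt d)⁻¹)))
          = CC * Real.sqrt d := by
        rw [hCC, ← hdd]
        field_simp
        nlinarith [hsq]
      rw [heq2]
  have hequi : ∀ (A : Set (BoundedContinuousFunction α (EuclideanSpace ℝ (Fin n)))),
      (∀ f ∈ A, ∃ k, X k = f) → Equicontinuous ((↑) : A → α → EuclideanSpace ℝ (Fin n)) := by
    intro A hA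
    refine Metric.equicontinuous_of_continuity_modulus (fun d => CC * Real.sqrt |d|) ?_ _ ?_
    · have hcont : Continuous fun d : ℝ => CC * Real.sqrt |d| :=
        continuous_const.mul (Real.continuous_sqrt.comp continuous_abs)
      have h0 : CC * Real.sqrt |(0:ℝ)| = 0 := by simp
      have := hcont.tendsto 0
      rwa [h0] at this
    · rintro a b ⟨f, hf⟩
      obtain ⟨k, hk⟩ := hA f hf
      show dist (f a) (f b) ≤ CC * Real.sqrt |dist a b|
      rw [← hk, abs_of_nonneg dist_nonneg]
      exact hXmod k a b
  -- Arzela-Ascoli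
  set A : Set (BoundedContinuousFunction α (EuclideanSpace ℝ (Fin n))) := Set.range X with hA
  have hcompact : IsCompact (closure A) := by
    refine BoundedContinuousFunction.arzela_ascoli
      (Metric.closedBall (0 : EuclideanSpace ℝ (Fin n)) (‖x0‖ + B)) (isCompact_closedBall _ _)
      A ?_ ?_
    · rintro f τ ⟨k, hk⟩
      rw [← hk, hXapp, Metric.mem_closedBall, dist_zero_right]
      exact hnorm k ↑τ τ.2
    · exact hequi A (fun f hf => hf)
  haveI : FirstCountableTopology (BoundedContinuousFunction α (EuclideanSpace ℝ (Fin n))) :=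
    UniformSpace.firstCountableTopology _
  obtain ⟨y, -, ρ, hρ, hyconv⟩ := hcompact.isSeqCompact
    (x := fun k => X k) (fun k => subset_closure (Set.mem_range_self k))
  -- the limit trajectory
  set xx : ℝ → EuclideanSpace ℝ (Fin n) := fun s => y (Set.projIcc 0 1 zero_le_one s) with hxx
  have hxxcont : Continuous xx := y.continuous.comp continuous_projIcc
  have hxxval : ∀ s (hs : s ∈ Set.Icc (0:ℝ) 1), xx s = y ⟨s, hs⟩ := by
    intro s hs
    show y (Set.projIcc 0 1 zero_le_one s) = y ⟨s, hs⟩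
    rw [Set.projIcc_of_mem zero_le_one hs]
  set ε : ℕ → ℝ := fun k => dist (X (ρ k)) y with hε
  have hεconv : Tendsto ε atTop (𝓝 0) := by
    have := tendsto_iff_dist_tendsto_zero.mp hyconv
    exact this
  have hεnn : ∀ k, 0 ≤ ε k := fun k => dist_nonneg
  have hunif : ∀ k, ∀ τ (hτ : τ ∈ Set.Icc (0:ℝ) 1), ‖x (ρ k) τ - xx τ‖ ≤ ε k := by
    intro k τ hτ
    rw [← dist_eq_norm, hxxval τ hτ]
    have := BoundedContinuousFunction.dist_coe_le_dist (f := X (ρ k)) (g := y) ⟨τ, hτ⟩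
    rwa [hXapp] at this
  have hpt : ∀ τ (hτ : τ ∈ Set.Icc (0:ℝ) 1),
      Tendsto (fun k => x (ρ k) τ) atTop (𝓝 (xx τ)) := by
    intro τ hτ
    rw [tendsto_iff_norm_sub_tendsto_zero]
    exact squeeze_zero (fun k => norm_nonneg _) (fun k => hunif k τ hτ) hεconv
  -- interval integrability of mixed integrands
  have hmix_int : ∀ (c : ℝ → Fin l → ℝ),
      (∀ i, IntegrableOn (fun τ => c τ i) (Set.Icc (0:ℝ) 1) volume) →
      ∀ s ∈ Set.Icc (0:ℝ) 1,
      IntervalIntegrable (fun τ => ∑ i, c τ i • F i (xx τ)) volume 0 s := by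
    intro c hc s hs
    rw [intervalIntegrable_iff_integrableOn_Ioc_of_le hs.1]
    refine integrable_finset_sum _ fun i _ => ?_
    have hsub : Set.Ioc 0 s ⊆ Set.Icc (0:ℝ) 1 := fun τ hτ => ⟨hτ.1.le, le_trans hτ.2 hs.2⟩
    have hci : IntegrableOn (fun τ => c τ i) (Set.Ioc 0 s) volume := (hc i).mono_set hsub
    refine Integrable.mono' (hci.abs.const_mul C0)
      (hci.aestronglyMeasurable.smul ((hFc i).comp hxxcont).aestronglyMeasurable) ?_
    refine Filter.Eventually.of_forall fun τ => ?_
    rw [norm_smul, Real.norm_eq_abs]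
    calc |c τ i| * ‖F i (xx τ)‖ ≤ |c τ i| * C0 :=
          mul_le_mul_of_nonneg_left (hC0 _ _) (abs_nonneg _)
      _ = C0 * |c τ i| := mul_comm _ _
  have huui := (comp_int uu huu).1
  refine ⟨xx, ?_, ρ, hρ, hpt 1 ⟨zero_le_one, le_rfl⟩⟩
  intro s hs
  have hsub01 : Set.Ioc (0:ℝ) s ⊆ Set.Icc (0:ℝ) 1 := fun τ hτ => ⟨hτ.1.le, le_trans hτ.2 hs.2⟩
  -- test functions
  set fj : Fin n → ℝ → EuclideanSpace ℝ (Fin l) := fun j τ' =>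
    (WithLp.equiv 2 (Fin l → ℝ)).symm (fun i' => F i' (xx τ') j) with hfjdef
  have hfjapp : ∀ j τ' i', fj j τ' i' = F i' (xx τ') j := fun j τ' i' => rfl
  set gj : Fin n → ℝ → EuclideanSpace ℝ (Fin l) :=
    fun j => Set.indicator (Set.Ioc (0:ℝ) s) (fj j) with hgjdef
  have hfjcont : ∀ j, Continuous (fj j) := by
    intro j
    show Continuous (fun τ' => (WithLp.equiv 2 (Fin l → ℝ)).symm (fun i' => F i' (xx τ') j))
    have h2 : Continuous (fun τ' => (fun i' => F i' (xx τ') j : Fin l → ℝ)) :=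
      continuous_pi fun i' =>
        (EuclideanSpace.proj (𝕜 := ℝ) j).continuous.comp ((hFc i').comp hxxcont)
    exact ((EuclideanSpace.equiv (Fin l) ℝ).symm.continuous).comp h2
  -- pairing identity
  have pair_eq : ∀ (c : ℝ → Fin l → ℝ),
      (∀ i, IntegrableOn (fun τ => c τ i) (Set.Icc (0:ℝ) 1) volume) → ∀ j : Fin n,
      (∫ τ in Set.Icc (0:ℝ) 1, ∑ i, c τ i * gj j τ i)
        = EuclideanSpace.proj j (∫ τ in (0:ℝ)..s, ∑ i, c τ i • F i (xx τ)) := by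
    intro c hc j
    rw [← ContinuousLinearMap.intervalIntegral_comp_comm _ (hmix_int c hc s hs)]
    have hproj : ∀ τ, (EuclideanSpace.proj (𝕜 := ℝ) j) (∑ i, c τ i • F i (xx τ))
        = ∑ i, c τ i * F i (xx τ) j := by
      intro τ
      rw [map_sum]
      refine Finset.sum_congr rfl fun i _ => ?_
      simp [smul_eq_mul]
    have hptwise : ∀ τ, (∑ i, c τ i * gj j τ i)
        = Set.indicator (Set.Ioc (0:ℝ) s) (fun τ' => ∑ i, c τ' i * F i (xx τ') j) τ := by
      intro τ
      by_cases hτ : τ ∈ Set.Ioc (0:ℝ) s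
      · rw [Set.indicator_of_mem hτ]
        simp only [hgjdef, Set.indicator_of_mem hτ]
        exact Finset.sum_congr rfl fun i _ => by rw [hfjapp]
      · rw [Set.indicator_of_notMem hτ]
        simp only [hgjdef, Set.indicator_of_notMem hτ]
        simp [show ∀ i : Fin l, (0 : EuclideanSpace ℝ (Fin l)) i = 0 from fun i => rfl]
    rw [show (fun τ => ∑ i, c τ i * gj j τ i) =
        fun τ => Set.indicator (Set.Ioc (0:ℝ) s) (fun τ' => ∑ i, c τ' i * F i (xx τ') j) τ
      from funext hptwise]
    rw [MeasureTheory.setIntegral_indicator measurableSet_Ioc,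
      Set.inter_eq_self_of_subset_right hsub01,
      intervalIntegral.integral_of_le hs.1]
    exact MeasureTheory.setIntegral_congr_fun measurableSet_Ioc fun τ _ => (hproj τ).symm
  -- test functions are in L²
  have hgjL2 : ∀ j : Fin n, MemLp (gj j) 2 (volume.restrict (Set.Icc (0:ℝ) 1)) := by
    intro j
    refine MemLp.of_bound (((hfjcont j).aestronglyMeasurable).indicator measurableSet_Ioc)
      (Real.sqrt l * C0) ?_
    refine Filter.Eventually.of_forall fun τ => ?_
    simp only [hgjdef]
    by_cases hτ : τ ∈ Set.Ioc (0:ℝ) s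
    · rw [Set.indicator_of_mem hτ]
      refine euclid_norm_le_of_coords _ _ hC0nn fun i' => ?_
      rw [hfjapp]
      exact le_trans (euclid_coord_le (F i' (xx τ)) j) (hC0 i' _)
    · rw [Set.indicator_of_notMem hτ]
      rw [norm_zero]
      positivity
  -- convergence of the mixed integrals
  have hD2 : Tendsto (fun k => ∫ τ in (0:ℝ)..s, ∑ i, q (ρ k) τ i • F i (xx τ)) atTop
      (𝓝 (∫ τ in (0:ℝ)..s, ∑ i, uu τ i • F i (xx τ))) := by
    rw [tendsto_iff_norm_sub_tendsto_zero]
    have hj : ∀ j : Fin n, Tendsto (fun k =>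
        |EuclideanSpace.proj j (∫ τ in (0:ℝ)..s, ∑ i, q (ρ k) τ i • F i (xx τ)) -
         EuclideanSpace.proj j (∫ τ in (0:ℝ)..s, ∑ i, uu τ i • F i (xx τ))|) atTop (𝓝 0) := by
      intro j
      have h1 : Tendsto (fun k => ∫ τ in Set.Icc (0:ℝ) 1, ∑ i, q (ρ k) τ i * gj j τ i) atTop
          (𝓝 (∫ τ in Set.Icc (0:ℝ) 1, ∑ i, uu τ i * gj j τ i)) :=
        (hweak _ (hgjL2 j)).comp hρ.tendsto_atTop
      have h2 : (fun k => ∫ τ in Set.Icc (0:ℝ) 1, ∑ i, q (ρ k) τ i * gj j τ i) =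
          fun k => EuclideanSpace.proj j (∫ τ in (0:ℝ)..s, ∑ i, q (ρ k) τ i • F i (xx τ)) :=
        funext fun k => pair_eq (q (ρ k)) (comp_int _ (hq (ρ k))).1 j
      rw [h2, pair_eq uu huui j] at h1
      have h3 := tendsto_iff_norm_sub_tendsto_zero.mp h1
      simpa [Real.norm_eq_abs] using h3
    have hsum : Tendsto (fun k => ∑ j : Fin n,
        |EuclideanSpace.proj j (∫ τ in (0:ℝ)..s, ∑ i, q (ρ k) τ i • F i (xx τ)) -
         EuclideanSpace.proj j (∫ τ in (0:ℝ)..s, ∑ i, uu τ i • F i (xx τ))|) atTop (𝓝 0) := by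
      have := tendsto_finset_sum (f := fun j k =>
        |EuclideanSpace.proj j (∫ τ in (0:ℝ)..s, ∑ i, q (ρ k) τ i • F i (xx τ)) -
         EuclideanSpace.proj j (∫ τ in (0:ℝ)..s, ∑ i, uu τ i • F i (xx τ))|)
        (a := fun _ => 0) Finset.univ (fun j _ => hj j)
      simpa using this
    refine squeeze_zero (fun k => norm_nonneg _) (fun k => ?_) hsum
    refine le_trans (euclid_norm_le_sum_abs _) (le_of_eq ?_)
    exact Finset.sum_congr rfl fun j _ => rfl
  -- the error term
  have hIg : ∀ k, IntervalIntegrable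
      (fun τ => ∑ i, q (ρ k) τ i • F i (x (ρ k) τ)) volume 0 s := fun k => (props (ρ k)).1 s hs
  have hImix : ∀ k, IntervalIntegrable
      (fun τ => ∑ i, q (ρ k) τ i • F i (xx τ)) volume 0 s :=
    fun k => hmix_int _ (comp_int _ (hq (ρ k))).1 s hs
  have hIabs : ∀ k, IntervalIntegrable (fun τ => ∑ i, |q (ρ k) τ i|) volume 0 s := by
    intro k
    rw [intervalIntegrable_iff_integrableOn_Ioc_of_le hs.1]
    exact integrable_finset_sum _ fun i _ =>
      (((comp_int _ (hq (ρ k))).1 i).mono_set hsub01).abs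
  set B1 : ℝ := l * (1 * 1 / 2 + R2 / (2 * 1)) with hB1
  have hB1nn : 0 ≤ B1 := by positivity
  have habsle : ∀ k, ∫ τ in (0:ℝ)..s, ∑ i, |q (ρ k) τ i| ≤ B1 := by
    intro k
    refine le_trans (absum_int_le (comp_int _ (hq (ρ k))).2 (comp_int _ (hq (ρ k))).1
      (hqR2 (ρ k)) one_pos le_rfl hs.1 hs.2) ?_
    rw [hB1]
    gcongr
    linarith [hs.2]
  have hD1 : Tendsto (fun k => ∫ τ in (0:ℝ)..s,
      (∑ i, q (ρ k) τ i • F i (x (ρ k) τ) - ∑ i, q (ρ k) τ i • F i (xx τ))) atTop (𝓝 0) := by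
    have hg0 : Tendsto (fun k => L * B1 * ε k) atTop (𝓝 0) := by
      have := hεconv.const_mul (L * B1)
      simpa using this
    refine squeeze_zero_norm (fun k => ?_) hg0
    · have hptw : ∀ τ ∈ Set.Icc 0 s,
          ‖∑ i, q (ρ k) τ i • F i (x (ρ k) τ) - ∑ i, q (ρ k) τ i • F i (xx τ)‖
          ≤ (L * ε k) * ∑ i, |q (ρ k) τ i| := by
        intro τ hτ
        have hτ1 : τ ∈ Set.Icc (0:ℝ) 1 := ⟨hτ.1, le_trans hτ.2 hs.2⟩
        rw [← Finset.sum_sub_distrib]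
        refine le_trans (norm_sum_le _ _) ?_
        rw [Finset.mul_sum]
        refine Finset.sum_le_sum fun i _ => ?_
        rw [← smul_sub, norm_smul, Real.norm_eq_abs]
        calc |q (ρ k) τ i| * ‖F i (x (ρ k) τ) - F i (xx τ)‖
            ≤ |q (ρ k) τ i| * (L * ‖x (ρ k) τ - xx τ‖) :=
              mul_le_mul_of_nonneg_left (hLip i _ _) (abs_nonneg _)
          _ ≤ |q (ρ k) τ i| * (L * ε k) := by
              refine mul_le_mul_of_nonneg_left ?_ (abs_nonneg _)
              exact mul_le_mul_of_nonneg_left (hunif k τ hτ1) hLnn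
          _ = L * ε k * |q (ρ k) τ i| := by ring
      calc ‖∫ τ in (0:ℝ)..s,
          (∑ i, q (ρ k) τ i • F i (x (ρ k) τ) - ∑ i, q (ρ k) τ i • F i (xx τ))‖
          ≤ ∫ τ in (0:ℝ)..s,
            ‖∑ i, q (ρ k) τ i • F i (x (ρ k) τ) - ∑ i, q (ρ k) τ i • F i (xx τ)‖ :=
            intervalIntegral.norm_integral_le_integral_norm hs.1
        _ ≤ ∫ τ in (0:ℝ)..s, (L * ε k) * ∑ i, |q (ρ k) τ i| := by
            refine intervalIntegral.integral_mono_on hs.1 ((hIg k).sub (hImix k)).norm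
              ((hIabs k).const_mul _) hptw
        _ = (L * ε k) * ∫ τ in (0:ℝ)..s, ∑ i, |q (ρ k) τ i| :=
            intervalIntegral.integral_const_mul _ _
        _ ≤ (L * ε k) * B1 := by
            refine mul_le_mul_of_nonneg_left (habsle k) ?_
            exact mul_nonneg hLnn (hεnn k)
        _ = L * B1 * ε k := by ring
  -- combine
  have hsplit : ∀ k, ∫ τ in (0:ℝ)..s, ∑ i, q (ρ k) τ i • F i (x (ρ k) τ)
      = (∫ τ in (0:ℝ)..s,
          (∑ i, q (ρ k) τ i • F i (x (ρ k) τ) - ∑ i, q (ρ k) τ i • F i (xx τ)))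
        + ∫ τ in (0:ℝ)..s, ∑ i, q (ρ k) τ i • F i (xx τ) := by
    intro k
    rw [intervalIntegral.integral_sub (hIg k) (hImix k), sub_add_cancel]
  have hDconv : Tendsto (fun k => ∫ τ in (0:ℝ)..s, ∑ i, q (ρ k) τ i • F i (x (ρ k) τ)) atTop
      (𝓝 (∫ τ in (0:ℝ)..s, ∑ i, uu τ i • F i (xx τ))) := by
    have h0 := hD1.add hD2
    rw [zero_add] at h0
    exact h0.congr (fun k => (hsplit k).symm)
  have h1 : Tendsto (fun k => x (ρ k) s) atTop
      (𝓝 (x0 + ∫ τ in (0:ℝ)..s, ∑ i, uu τ i • F i (xx τ))) := by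
    have h0 := tendsto_const_nhds (x := x0) (f := atTop (α := ℕ)) |>.add hDconv
    exact h0.congr (fun k => (hx (ρ k) s hs).symm)
  exact tendsto_nhds_unique (hpt s hs) h1
end Core2


end Aux



/-- If `Ψ` is not the restriction to the compact `K` of any time-1 flow, and the flows
of the controls `u ℓ` converge to `Ψ` uniformly on `K`, then `sup_ℓ ‖u ℓ‖_{L²} = +∞`. -/
theorem stmt3 (n l : ℕ)
    (F : Fin l → EuclideanSpace ℝ (Fin n) → EuclideanSpace ℝ (Fin n))
    (hF_smooth : ∀ i, ContDiff ℝ (⊤ : ℕ∞) (F i))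
    (hF_bdd : ∀ i k, ∃ C : ℝ, ∀ x, ‖iteratedFDeriv ℝ k (F i) x‖ ≤ C)
    (K : Set (EuclideanSpace ℝ (Fin n))) (hK : IsCompact K)
    (Ψ : EuclideanSpace ℝ (Fin n) → EuclideanSpace ℝ (Fin n))
    (hΨ : ¬ ∃ (u : ℝ → Fin l → ℝ) (Φ : EuclideanSpace ℝ (Fin n) → EuclideanSpace ℝ (Fin n)),
      MemLp u 2 (volume.restrict (Set.Icc (0:ℝ) 1)) ∧ IsFlow F u Φ ∧ Set.EqOn Φ Ψ K)
    (u : ℕ → ℝ → Fin l → ℝ)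
    (hu : ∀ ℓ, MemLp (u ℓ) 2 (volume.restrict (Set.Icc (0:ℝ) 1)))
    (Φ : ℕ → EuclideanSpace ℝ (Fin n) → EuclideanSpace ℝ (Fin n))
    (hΦ : ∀ ℓ, IsFlow F (u ℓ) (Φ ℓ))
    (hconv : TendstoUniformlyOn Φ Ψ atTop K) :
    ¬ ∃ R : ℝ, ∀ ℓ, ctrlNorm (u ℓ) ≤ R := by
  classical
  rintro ⟨R, hR⟩
  -- bound on F
  have hC0ex : ∀ i : Fin l, ∃ C : ℝ, ∀ y, ‖F i y‖ ≤ C := by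
    intro i
    obtain ⟨C, hC⟩ := hF_bdd i 0
    exact ⟨C, fun y => by have := hC y; rwa [norm_iteratedFDeriv_zero] at this⟩
  choose C0f hC0f using hC0ex
  set C0 : ℝ := ∑ i, max (C0f i) 0 with hC0def
  have hC0 : ∀ i y, ‖F i y‖ ≤ C0 := by
    intro i y
    refine le_trans (le_trans (hC0f i y) (le_max_left _ (0:ℝ))) ?_
    exact Finset.single_le_sum (f := fun i => max (C0f i) 0)
      (fun j _ => le_max_right _ _) (Finset.mem_univ i)
  have hC0nn : 0 ≤ C0 := Finset.sum_nonneg fun i _ => le_max_right _ _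
  have hFc : ∀ i, Continuous (F i) := fun i => (hF_smooth i).continuous
  -- Lipschitz bound on F
  have hLipex : ∀ i : Fin l, ∃ C : ℝ, 0 ≤ C ∧ ∀ a b, ‖F i a - F i b‖ ≤ C * ‖a - b‖ := by
    intro i
    obtain ⟨C, hC⟩ := hF_bdd i 1
    refine ⟨max C 0, le_max_right _ _, fun a b => ?_⟩
    have hdiff : ∀ y, DifferentiableAt ℝ (F i) y := fun y =>
      ((hF_smooth i).differentiable (by simp)).differentiableAt
    have hfd : ∀ y : EuclideanSpace ℝ (Fin n), ‖fderiv ℝ (F i) y‖ ≤ max C 0 := by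
      intro y
      refine ContinuousLinearMap.opNorm_le_bound _ (le_max_right _ _) fun z => ?_
      have h1 : fderiv ℝ (F i) y z = iteratedFDeriv ℝ 1 (F i) y ![z] := by
        rw [iteratedFDeriv_one_apply]
        congr
      rw [h1]
      refine le_trans (ContinuousMultilinearMap.le_opNorm _ _) ?_
      have h2 : (∏ j : Fin 1, ‖(![z] : Fin 1 → EuclideanSpace ℝ (Fin n)) j‖) = ‖z‖ := by simp
      rw [h2]
      exact mul_le_mul_of_nonneg_right (le_trans (hC y) (le_max_left _ _)) (norm_nonneg _)
    exact Convex.norm_image_sub_le_of_norm_fderiv_le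
      (fun y _ => hdiff y) (fun y _ => hfd y) convex_univ (Set.mem_univ b) (Set.mem_univ a)
  choose Lf hLf0 hLf using hLipex
  set L : ℝ := ∑ i, Lf i with hLdef
  have hLnn : 0 ≤ L := Finset.sum_nonneg fun i _ => hLf0 i
  have hLip : ∀ i (a b : EuclideanSpace ℝ (Fin n)), ‖F i a - F i b‖ ≤ L * ‖a - b‖ := by
    intro i a b
    refine le_trans (hLf i a b) (mul_le_mul_of_nonneg_right ?_ (norm_nonneg _))
    exact Finset.single_le_sum (fun j _ => hLf0 j) (Finset.mem_univ i)
  -- square-integral bounds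
  have hR0 : 0 ≤ R := le_trans (Real.sqrt_nonneg _) (hR 0)
  have hTot : ∀ ℓ, ∫ τ in Set.Icc (0:ℝ) 1, ∑ j, (u ℓ τ j)^2 ≤ R^2 := by
    intro ℓ
    have h1 : (0:ℝ) ≤ ∫ τ in Set.Icc (0:ℝ) 1, ∑ j, (u ℓ τ j)^2 :=
      integral_nonneg fun τ => Finset.sum_nonneg fun j _ => sq_nonneg _
    have h2 := hR ℓ
    rw [ctrlNorm] at h2
    calc ∫ τ in Set.Icc (0:ℝ) 1, ∑ j, (u ℓ τ j)^2
        = (Real.sqrt (∫ τ in Set.Icc (0:ℝ) 1, ∑ j, (u ℓ τ j)^2))^2 := (Real.sq_sqrt h1).symm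
      _ ≤ R^2 := by
          have := Real.sqrt_nonneg (∫ τ in Set.Icc (0:ℝ) 1, ∑ j, (u ℓ τ j)^2)
          nlinarith
  have huR2 : ∀ ℓ i, ∫ τ in Set.Icc (0:ℝ) 1, (u ℓ τ i)^2 ≤ R^2 := by
    intro ℓ i
    have hsum : ∫ τ in Set.Icc (0:ℝ) 1, ∑ j, (u ℓ τ j)^2
        = ∑ j, ∫ τ in Set.Icc (0:ℝ) 1, (u ℓ τ j)^2 :=
      integral_finset_sum _ (fun j _ => (comp_int _ (hu ℓ)).2 j)
    have hle : ∫ τ in Set.Icc (0:ℝ) 1, (u ℓ τ i)^2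
        ≤ ∑ j, ∫ τ in Set.Icc (0:ℝ) 1, (u ℓ τ j)^2 :=
      Finset.single_le_sum (f := fun j => ∫ τ in Set.Icc (0:ℝ) 1, (u ℓ τ j)^2)
        (fun j _ => integral_nonneg fun τ => sq_nonneg _) (Finset.mem_univ i)
    rw [← hsum] at hle
    exact le_trans hle (hTot ℓ)
  -- Lp packaging
  haveI : Fact ((2:ENNReal) ≠ ⊤) := ⟨by norm_num⟩
  set uE : ℕ → ℝ → EuclideanSpace ℝ (Fin l) :=
    fun ℓ τ => (WithLp.equiv 2 (Fin l → ℝ)).symm (u ℓ τ) with huE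
  have huEL2 : ∀ ℓ, MemLp (uE ℓ) 2 (volume.restrict (Set.Icc (0:ℝ) 1)) := by
    intro ℓ
    refine MemLp.of_le_mul (c := Real.sqrt l) (hu ℓ) ?_ ?_
    · exact ((PiLp.continuousLinearEquiv 2 ℝ
        (fun _ : Fin l => ℝ)).symm.continuous).comp_aestronglyMeasurable (hu ℓ).1
    · refine Filter.Eventually.of_forall fun τ => ?_
      refine euclid_norm_le_of_coords _ _ (norm_nonneg _) fun i => ?_
      have := norm_le_pi_norm (u ℓ τ) i
      rwa [Real.norm_eq_abs] at this
  set V : ℕ → Lp (EuclideanSpace ℝ (Fin l)) 2 (volume.restrict (Set.Icc (0:ℝ) 1)) :=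
    fun ℓ => (huEL2 ℓ).toLp (uE ℓ) with hV
  haveI : SecondCountableTopology
      (Lp (EuclideanSpace ℝ (Fin l)) 2 (volume.restrict (Set.Icc (0:ℝ) 1))) :=
    Lp.SecondCountableTopology
  have hinner : ∀ (ℓ : ℕ) (f : ℝ → EuclideanSpace ℝ (Fin l))
      (hf : MemLp f 2 (volume.restrict (Set.Icc (0:ℝ) 1))),
      (inner ℝ (V ℓ) (hf.toLp f) : ℝ) = ∫ τ in Set.Icc (0:ℝ) 1, ∑ i, u ℓ τ i * f τ i := by
    intro ℓ f hf
    rw [L2.inner_def]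
    refine integral_congr_ae ?_
    filter_upwards [(huEL2 ℓ).coeFn_toLp, hf.coeFn_toLp] with τ h1 h2
    rw [h1, h2, PiLp.inner_apply]
    simp [RCLike.inner_apply, huE, mul_comm]
  have hVnorm : ∀ ℓ, ‖V ℓ‖ ≤ R := by
    intro ℓ
    have h1 : (inner ℝ (V ℓ) (V ℓ) : ℝ) = ∫ τ in Set.Icc (0:ℝ) 1, ∑ i, (u ℓ τ i)^2 := by
      rw [L2.inner_def]
      refine integral_congr_ae ?_
      filter_upwards [(huEL2 ℓ).coeFn_toLp] with τ h1
      rw [h1, PiLp.inner_apply]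
      simp [RCLike.inner_apply, huE, sq]
    have h2 : ‖V ℓ‖^2 ≤ R^2 := by
      rw [← real_inner_self_eq_norm_sq, h1]
      exact hTot ℓ
    calc ‖V ℓ‖ = Real.sqrt (‖V ℓ‖^2) := (Real.sqrt_sq (norm_nonneg _)).symm
      _ ≤ Real.sqrt (R^2) := Real.sqrt_le_sqrt h2
      _ = R := Real.sqrt_sq hR0
  obtain ⟨w, φ, hφ, hWK⟩ := weak_compact_aux V R hVnorm
  set uu : ℝ → Fin l → ℝ := fun τ i => (w : ℝ → EuclideanSpace ℝ (Fin l)) τ i with huudef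
  have huu : MemLp uu 2 (volume.restrict (Set.Icc (0:ℝ) 1)) := by
    refine MemLp.of_le_mul (c := 1) (Lp.memLp w) ?_ (Filter.Eventually.of_forall fun τ => ?_)
    · exact ((PiLp.continuousLinearEquiv 2 ℝ
        (fun _ : Fin l => ℝ)).continuous).comp_aestronglyMeasurable (Lp.aestronglyMeasurable w)
    · rw [one_mul]
      refine (pi_norm_le_iff_of_nonneg (norm_nonneg _)).mpr fun i => ?_
      rw [Real.norm_eq_abs]
      exact euclid_coord_le _ i
  have hinnerW : ∀ (f : ℝ → EuclideanSpace ℝ (Fin l))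
      (hf : MemLp f 2 (volume.restrict (Set.Icc (0:ℝ) 1))),
      (inner ℝ w (hf.toLp f) : ℝ) = ∫ τ in Set.Icc (0:ℝ) 1, ∑ i, uu τ i * f τ i := by
    intro f hf
    rw [L2.inner_def]
    refine integral_congr_ae ?_
    filter_upwards [hf.coeFn_toLp] with τ h2
    rw [h2, PiLp.inner_apply]
    simp [RCLike.inner_apply, huudef, mul_comm]
  have hweak : ∀ f : ℝ → EuclideanSpace ℝ (Fin l),
      MemLp f 2 (volume.restrict (Set.Icc (0:ℝ) 1)) →
      Tendsto (fun k => ∫ τ in Set.Icc (0:ℝ) 1, ∑ i, u (φ k) τ i * f τ i)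
        atTop (𝓝 (∫ τ in Set.Icc (0:ℝ) 1, ∑ i, uu τ i * f τ i)) := by
    intro f hf
    have h := hWK (hf.toLp f)
    rw [hinnerW f hf] at h
    exact h.congr (fun k => hinner (φ k) f hf)
  -- limit trajectories
  have hP : ∀ x0, ∃ xx, IsCtrlTraj F uu x0 xx ∧ (x0 ∈ K → xx 1 = Ψ x0) := by
    intro x0
    choose xtraj hxtraj hΦval using fun k => hΦ (φ k) x0
    obtain ⟨xx, hxx, ρ, hρ, hxxconv⟩ := exists_limit_traj hC0 hC0nn hFc hLip hLnn (sq_nonneg R)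
      (fun k => u (φ k)) (fun k => hu (φ k)) (fun k i => huR2 (φ k) i) uu huu hweak x0 xtraj hxtraj
    refine ⟨xx, hxx, fun hx0K => ?_⟩
    have h1 : Tendsto (fun k => Φ (φ (ρ k)) x0) atTop (𝓝 (Ψ x0)) :=
      (hconv.tendsto_at hx0K).comp ((hφ.comp hρ).tendsto_atTop)
    have h2 : Tendsto (fun k => Φ (φ (ρ k)) x0) atTop (𝓝 (xx 1)) := by
      refine hxxconv.congr fun k => ?_
      rw [hΦval (ρ k)]
    exact tendsto_nhds_unique h2 h1
  choose xxf hxxf hxxfK using hP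
  exact hΨ ⟨uu, fun x0 => xxf x0 1, huu, fun x0 => ⟨xxf x0, hxxf x0, rfl⟩,
    fun x0 hx0 => hxxfK x0 hx0⟩
end

section
/- Suppose the flows of the control system are $C^0$-dense on compacts in the class of diffeomorphisms diffeotopic to the identity (i.e., for every $\rho>0$ there exists $\hat u\in\mathcal{U}$ with $\sup_{x\in K}|\Phi_{\hat u}(x)-\Psi(x)|<\rho$). Define $\kappa_\beta=\sup\{\int_K a(\Phi_{\tilde u}(x)-\Psi(x))\,d\mu(x): \tilde u\in\arg\min_{\mathcal{U}}\mathcal{F}\}$ where $\mathcal{F}(u)=\int_K a(\Phi_u(x)-\Psi(x))\,d\mu(x)+\frac\beta2\|u\|_{L^2}^2$. If $a$ is continuous, nonnegative, and $a(0)=0$, then $\lim_{\beta\to0^+}\kappa_\beta=0$. -/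
open MeasureTheory Filter

/-- The squared `L²([0,1])`-norm of a control. -/
noncomputable def ctrlNormSq {l : ℕ} (u : ℝ → Fin l → ℝ) : ℝ :=
  ∫ s in Set.Icc (0:ℝ) 1, ∑ i, (u s i)^2

/-- If the flows are `C⁰`-dense on `K` around `Ψ`, then the worst optimal training error
`κ_β` over minimizers of the regularized functional `𝓕` tends to `0` as `β → 0⁺`. -/
theorem stmt10 (n l : ℕ)
    (F : Fin l → EuclideanSpace ℝ (Fin n) → EuclideanSpace ℝ (Fin n))
    (hF_smooth : ∀ i, ContDiff ℝ (⊤ : ℕ∞) (F i))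
    (hF_bdd : ∀ i k, ∃ C : ℝ, ∀ x, ‖iteratedFDeriv ℝ k (F i) x‖ ≤ C)
    (K : Set (EuclideanSpace ℝ (Fin n))) (hK : IsCompact K)
    (μ : Measure (EuclideanSpace ℝ (Fin n))) [IsProbabilityMeasure μ] (hμK : μ Kᶜ = 0)
    (a : EuclideanSpace ℝ (Fin n) → ℝ) (ha_cont : Continuous a)
    (ha_nonneg : ∀ x, 0 ≤ a x) (ha0 : a 0 = 0)
    (Ψ : EuclideanSpace ℝ (Fin n) → EuclideanSpace ℝ (Fin n)) (hΨ : Continuous Ψ)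
    (Flow : (ℝ → Fin l → ℝ) → EuclideanSpace ℝ (Fin n) → EuclideanSpace ℝ (Fin n))
    (hFlow : ∀ u, MemLp u 2 (volume.restrict (Set.Icc (0:ℝ) 1)) → IsFlow F u (Flow u))
    -- density of flows around Ψ in C⁰(K)
    (hdense : ∀ ρ : ℝ, 0 < ρ → ∃ u : ℝ → Fin l → ℝ,
      MemLp u 2 (volume.restrict (Set.Icc (0:ℝ) 1)) ∧ ∀ x ∈ K, ‖Flow u x - Ψ x‖ < ρ)
    (κ : ℝ → ℝ)
    (hκ : ∀ β : ℝ, 0 < β → κ β =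
      sSup {r : ℝ | ∃ tu : ℝ → Fin l → ℝ,
        MemLp tu 2 (volume.restrict (Set.Icc (0:ℝ) 1)) ∧
        (∀ v : ℝ → Fin l → ℝ, MemLp v 2 (volume.restrict (Set.Icc (0:ℝ) 1)) →
          (∫ x in K, a (Flow tu x - Ψ x) ∂μ) + β / 2 * ctrlNormSq tu ≤
          (∫ x in K, a (Flow v x - Ψ x) ∂μ) + β / 2 * ctrlNormSq v) ∧
        r = ∫ x in K, a (Flow tu x - Ψ x) ∂μ}) :
    Tendsto κ (nhdsWithin 0 (Set.Ioi 0)) (nhds 0) := by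

  rw [Metric.tendsto_nhdsWithin_nhds]
  intro ε hε
  have hcont : ContinuousAt a 0 := ha_cont.continuousAt
  rw [Metric.continuousAt_iff] at hcont
  obtain ⟨ρ, hρ, hball⟩ := hcont (ε/4) (by positivity)
  obtain ⟨uh, huhmem, huh⟩ := hdense ρ hρ
  set C := ctrlNormSq uh with hCdef
  have hC : 0 ≤ C := by
    apply integral_nonneg
    intro s
    exact Finset.sum_nonneg fun i _ => sq_nonneg _
  refine ⟨ε/2/(C+1), by positivity, ?_⟩
  intro β hβ hβdist
  have hβpos : 0 < β := hβ
  have hβlt : β < ε/2/(C+1) := by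
    rwa [Real.dist_eq, sub_zero, abs_of_pos hβpos] at hβdist
  rw [hκ β hβpos]
  have hKm : MeasurableSet K := hK.measurableSet
  -- bound on the integral for uh
  have hI1 : (∫ x in K, a (Flow uh x - Ψ x) ∂μ) ≤ ε/4 := by
    have hle : ∀ x ∈ K, a (Flow uh x - Ψ x) ≤ ε/4 := by
      intro x hx
      have := hball (x := Flow uh x - Ψ x) (by
        rw [dist_zero_right]; exact huh x hx)
      rw [ha0, dist_zero_right, Real.norm_eq_abs,
        abs_of_nonneg (ha_nonneg _)] at this
      exact this.le
    calc (∫ x in K, a (Flow uh x - Ψ x) ∂μ)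
        ≤ ∫ _x in K, (ε/4) ∂μ := by
          apply integral_mono_of_nonneg
          · exact Filter.Eventually.of_forall fun x => ha_nonneg _
          · exact integrable_const _
          · exact (ae_restrict_iff' hKm).2 (Filter.Eventually.of_forall hle)
      _ = (μ K).toReal * (ε/4) := by rw [setIntegral_const, smul_eq_mul]; rfl
      _ ≤ 1 * (ε/4) := by
          apply mul_le_mul_of_nonneg_right _ (by positivity)
          exact ENNReal.toReal_le_of_le_ofReal (by norm_num)
            (by simpa using prob_le_one (μ := μ) (s := K))
      _ = ε/4 := one_mul _
  -- every element of the set lies in [0, ε/2]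
  have hub : ∀ r ∈ {r : ℝ | ∃ tu : ℝ → Fin l → ℝ,
        MemLp tu 2 (volume.restrict (Set.Icc (0:ℝ) 1)) ∧
        (∀ v : ℝ → Fin l → ℝ, MemLp v 2 (volume.restrict (Set.Icc (0:ℝ) 1)) →
          (∫ x in K, a (Flow tu x - Ψ x) ∂μ) + β / 2 * ctrlNormSq tu ≤
          (∫ x in K, a (Flow v x - Ψ x) ∂μ) + β / 2 * ctrlNormSq v) ∧
        r = ∫ x in K, a (Flow tu x - Ψ x) ∂μ}, r ≤ ε/2 ∧ 0 ≤ r := by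
    rintro r ⟨tu, htumem, hmin, rfl⟩
    have hNtu : 0 ≤ ctrlNormSq tu := by
      apply integral_nonneg
      intro s
      exact Finset.sum_nonneg fun i _ => sq_nonneg _
    have hmin' := hmin uh huhmem
    have hβC : β / 2 * C ≤ ε/4 := by
      have h1 : β * (C+1) ≤ ε/2 := by
        rw [div_div] at hβlt
        have := (lt_div_iff₀ (by positivity)).mp hβlt
        linarith
      nlinarith
    constructor
    · nlinarith [hI1, hmin']
    · exact integral_nonneg fun x => ha_nonneg _
  have h1 : sSup {r : ℝ | ∃ tu : ℝ → Fin l → ℝ,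
        MemLp tu 2 (volume.restrict (Set.Icc (0:ℝ) 1)) ∧
        (∀ v : ℝ → Fin l → ℝ, MemLp v 2 (volume.restrict (Set.Icc (0:ℝ) 1)) →
          (∫ x in K, a (Flow tu x - Ψ x) ∂μ) + β / 2 * ctrlNormSq tu ≤
          (∫ x in K, a (Flow v x - Ψ x) ∂μ) + β / 2 * ctrlNormSq v) ∧
        r = ∫ x in K, a (Flow tu x - Ψ x) ∂μ} ≤ ε/2 :=
    Real.sSup_le (fun r hr => (hub r hr).1) (by positivity)
  have h2 : 0 ≤ sSup {r : ℝ | ∃ tu : ℝ → Fin l → ℝ,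
        MemLp tu 2 (volume.restrict (Set.Icc (0:ℝ) 1)) ∧
        (∀ v : ℝ → Fin l → ℝ, MemLp v 2 (volume.restrict (Set.Icc (0:ℝ) 1)) →
          (∫ x in K, a (Flow tu x - Ψ x) ∂μ) + β / 2 * ctrlNormSq tu ≤
          (∫ x in K, a (Flow v x - Ψ x) ∂μ) + β / 2 * ctrlNormSq v) ∧
        r = ∫ x in K, a (Flow tu x - Ψ x) ∂μ} :=
    Real.sSup_nonneg (fun r hr => (hub r hr).2)
  rw [Real.dist_eq, sub_zero, abs_of_nonneg h2]
  linarith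
end
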